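/- arXiv:2010.13846 — 7 statements merged into one kernel-verified Lean document; each statement's English description precedes it below -/
import Mathlib

section
/- For the bilinear game dynamics Ẍ = -μẊ - AY - qAẎ, Ÿ = -μẎ + AᵀX + qAᵀẊ with the choice q = 2/μ + μ, the time derivative of E_t = ½‖Ẋ + μX + μAY‖² + ½‖Ẏ + μY - μAᵀX‖² + ½(‖Ẋ‖² + ‖Ẏ‖²) + ‖AᵀX‖² + ‖AY‖² satisfies Ė_t = -μ(‖AᵀX‖² + ‖AY‖²) - μ(‖Ẋ‖² + ‖Ẏ‖²) ≤ 0. -/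
/-!
Differentiating the squared norms in `E` gives inner products; after substituting the dynamics and
moving every `Aᵀ` across the inner product (`⟨v, Aᵀ x⟩ = ⟨x, A v⟩`), all cross terms cancel
precisely because `μ q = 2 + μ²`, leaving only the damping terms.
-/

open Matrix

theorem HasDerivAt.matrix_mulVec {m n : Type*} [Fintype m] [Fintype n] (B : Matrix m n ℝ)
    {f : ℝ → n → ℝ} {f' : n → ℝ} {t : ℝ} (hf : HasDerivAt f f' t) :
    HasDerivAt (fun s ↦ B *ᵥ f s) (B *ᵥ f') t :=
  (mulVecLin B).toContinuousLinearMap.hasFDerivAt.comp_hasDerivAt t hf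

theorem HasDerivAt.sum_sq {ι : Type*} [Fintype ι] {f : ℝ → ι → ℝ} {f' : ι → ℝ} {t : ℝ}
    (hf : HasDerivAt f f' t) : HasDerivAt (fun s ↦ ∑ i, f s i ^ 2) (2 * (f t ⬝ᵥ f')) t := by
  rw [dotProduct, Finset.mul_sum]
  exact HasDerivAt.fun_sum fun i _ ↦ by
    simpa [mul_assoc] using (hasDerivAt_pi.1 hf i).fun_pow 2

theorem sum_sq_eq_dotProduct_self {ι R : Type*} [Fintype ι] [CommSemiring R] (v : ι → R) :
    ∑ i, v i ^ 2 = v ⬝ᵥ v := by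
  simp only [dotProduct, sq]

theorem bilinear_lyapunov_identity {ι : Type*} [Fintype ι] (A : Matrix ι ι ℝ) {μ q : ℝ}
    (hq : μ * q = 2 + μ ^ 2) {x y u v u' v' : ι → ℝ}
    (hu' : u' = -(μ • u) - A *ᵥ y - q • A *ᵥ v)
    (hv' : v' = -(μ • v) + Aᵀ *ᵥ x + q • Aᵀ *ᵥ u) :
    (u + μ • x + μ • A *ᵥ y) ⬝ᵥ (u' + μ • u + μ • A *ᵥ v)
      + (v + μ • y - μ • Aᵀ *ᵥ x) ⬝ᵥ (v' + μ • v - μ • Aᵀ *ᵥ u)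
      + (u ⬝ᵥ u' + v ⬝ᵥ v') + 2 * (Aᵀ *ᵥ x ⬝ᵥ Aᵀ *ᵥ u) + 2 * (A *ᵥ y ⬝ᵥ A *ᵥ v)
    = -μ * (Aᵀ *ᵥ x ⬝ᵥ Aᵀ *ᵥ x + A *ᵥ y ⬝ᵥ A *ᵥ y) - μ * (u ⬝ᵥ u + v ⬝ᵥ v) := by
  subst hu' hv'
  simp only [add_dotProduct, sub_dotProduct, dotProduct_add, dotProduct_sub,
    dotProduct_neg, smul_dotProduct, dotProduct_smul, smul_eq_mul]
  simp only [dotProduct_transpose_mulVec A v, dotProduct_transpose_mulVec A y]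
  linear_combination (u ⬝ᵥ A *ᵥ y - x ⬝ᵥ A *ᵥ v - A *ᵥ y ⬝ᵥ A *ᵥ v - Aᵀ *ᵥ x ⬝ᵥ Aᵀ *ᵥ u) * hq

/-- For the bilinear game dynamics with q = 2/μ + μ, the time derivative of the
Lyapunov function E_t equals -μ(‖AᵀX‖² + ‖AY‖²) - μ(‖Ẋ‖² + ‖Ẏ‖²) ≤ 0. -/
theorem lead_bilinear_lyapunov_deriv
    (n : ℕ) (A : Matrix (Fin n) (Fin n) ℝ) (μ q : ℝ) (hμ : 0 < μ)
    (hq : q = 2/μ + μ)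
    (X Y : ℝ → (Fin n → ℝ)) (hX : ContDiff ℝ 2 X) (hY : ContDiff ℝ 2 Y)
    (hdynX : ∀ t : ℝ, deriv (deriv X) t =
      -(μ • deriv X t) - A.mulVec (Y t) - q • A.mulVec (deriv Y t))
    (hdynY : ∀ t : ℝ, deriv (deriv Y) t =
      -(μ • deriv Y t) + Aᵀ.mulVec (X t) + q • Aᵀ.mulVec (deriv X t))
    (E : ℝ → ℝ)
    (hE : ∀ t : ℝ, E t =
      (1/2) * ∑ i, (deriv X t i + μ * X t i + μ * A.mulVec (Y t) i) ^ 2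
        + (1/2) * ∑ i, (deriv Y t i + μ * Y t i - μ * Aᵀ.mulVec (X t) i) ^ 2
        + (1/2) * (∑ i, (deriv X t i) ^ 2 + ∑ i, (deriv Y t i) ^ 2)
        + ∑ i, (Aᵀ.mulVec (X t) i) ^ 2 + ∑ i, (A.mulVec (Y t) i) ^ 2) :
    ∀ t : ℝ,
      deriv E t = -μ * (∑ i, (Aᵀ.mulVec (X t) i) ^ 2 + ∑ i, (A.mulVec (Y t) i) ^ 2)
                  - μ * (∑ i, (deriv X t i) ^ 2 + ∑ i, (deriv Y t i) ^ 2)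
      ∧ deriv E t ≤ 0 := by
  intro t
  have hX₁ := (hX.differentiable two_ne_zero t).hasDerivAt
  have hY₁ := (hY.differentiable two_ne_zero t).hasDerivAt
  have hX₂ := (hX.differentiable_deriv_two t).hasDerivAt
  have hY₂ := (hY.differentiable_deriv_two t).hasDerivAt
  have hE' : HasDerivAt E _ t :=
    (((((((hX₂.fun_add (hX₁.fun_const_smul μ)).fun_add
      ((hY₁.matrix_mulVec A).fun_const_smul μ)).sum_sq.const_mul (1/2)).fun_add
      (((hY₂.fun_add (hY₁.fun_const_smul μ)).fun_sub
        ((hX₁.matrix_mulVec Aᵀ).fun_const_smul μ)).sum_sq.const_mul (1/2))).fun_add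
      ((hX₂.sum_sq.fun_add hY₂.sum_sq).const_mul (1/2))).fun_add
      (hX₁.matrix_mulVec Aᵀ).sum_sq).fun_add (hY₁.matrix_mulVec A).sum_sq).congr_of_eventuallyEq
      (.of_forall hE)
  have hq' : μ * q = 2 + μ ^ 2 := by rw [hq]; field_simp
  have hderiv : deriv E t = -μ * (∑ i, (Aᵀ.mulVec (X t) i) ^ 2 + ∑ i, (A.mulVec (Y t) i) ^ 2)
      - μ * (∑ i, (deriv X t i) ^ 2 + ∑ i, (deriv Y t i) ^ 2) := by
    rw [hE'.deriv]
    simp only [sum_sq_eq_dotProduct_self]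
    linear_combination bilinear_lyapunov_identity A hq' (hdynX t) (hdynY t)
  refine ⟨hderiv, hderiv ▸ ?_⟩
  rw [neg_mul, neg_sub_left, neg_nonpos]
  positivity
end

section
/- For the scalar quadratic game f(X,Y) = (h/2)X² - (h/2)Y² + XY with dynamics Ẍ = -qẎ - μẊ - hX - Y and Ÿ = qẊ - μẎ - hY + X, choosing q = (2+μ²)/μ, the function E_t = ½(Ẋ + μX + μY)² + ½(Ẏ + μY - μX)² + ½(Ẋ² + Ẏ²) + (1+h)(X²+Y²) satisfies Ė_t = -μ(1+h)(X²+Y²) - μ(Ẋ²+Ẏ²) ≤ 0. -/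
/-- For the scalar quadratic game dynamics with q = (2+μ²)/μ, the Lyapunov function
satisfies Ė_t = -μ(1+h)(X²+Y²) - μ(Ẋ²+Ẏ²) ≤ 0. -/
theorem lead_quadratic_lyapunov_deriv
    (h μ q : ℝ) (hh : 0 < h) (hμ : 0 < μ) (hq : q = (2 + μ ^ 2) / μ)
    (X Y : ℝ → ℝ) (hX : ContDiff ℝ 2 X) (hY : ContDiff ℝ 2 Y)
    (hdX : ∀ t : ℝ, deriv (deriv X) t =
      -q * deriv Y t - μ * deriv X t - h * X t - Y t)
    (hdY : ∀ t : ℝ, deriv (deriv Y) t =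
      q * deriv X t - μ * deriv Y t - h * Y t + X t)
    (E : ℝ → ℝ)
    (hE : ∀ t : ℝ, E t =
      (1/2) * (deriv X t + μ * X t + μ * Y t) ^ 2
        + (1/2) * (deriv Y t + μ * Y t - μ * X t) ^ 2
        + (1/2) * ((deriv X t) ^ 2 + (deriv Y t) ^ 2)
        + (1 + h) * ((X t) ^ 2 + (Y t) ^ 2)) :
    ∀ t : ℝ,
      deriv E t = -μ * (1 + h) * ((X t) ^ 2 + (Y t) ^ 2)
                  - μ * ((deriv X t) ^ 2 + (deriv Y t) ^ 2)
      ∧ deriv E t ≤ 0 := by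
  have hXd : Differentiable ℝ X := hX.differentiable (by norm_num)
  have hYd : Differentiable ℝ Y := hY.differentiable (by norm_num)
  have hX'd : Differentiable ℝ (deriv X) :=
    (hX.iterate_deriv' 1 1).differentiable (by norm_num)
  have hY'd : Differentiable ℝ (deriv Y) :=
    (hY.iterate_deriv' 1 1).differentiable (by norm_num)
  intro t
  have h1 : HasDerivAt X (deriv X t) t := (hXd t).hasDerivAt
  have h2 : HasDerivAt Y (deriv Y t) t := (hYd t).hasDerivAt
  have h3 : HasDerivAt (deriv X) (deriv (deriv X) t) t := (hX'd t).hasDerivAt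
  have h4 : HasDerivAt (deriv Y) (deriv (deriv Y) t) t := (hY'd t).hasDerivAt
  have hEeq : E = fun t =>
      (1/2) * (deriv X t + μ * X t + μ * Y t) ^ 2
        + (1/2) * (deriv Y t + μ * Y t - μ * X t) ^ 2
        + (1/2) * ((deriv X t) ^ 2 + (deriv Y t) ^ 2)
        + (1 + h) * ((X t) ^ 2 + (Y t) ^ 2) := funext hE
  have hA : HasDerivAt (fun t => deriv X t + μ * X t + μ * Y t)
      (deriv (deriv X) t + μ * deriv X t + μ * deriv Y t) t :=
    (h3.add (h1.const_mul μ)).add (h2.const_mul μ)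
  have hB : HasDerivAt (fun t => deriv Y t + μ * Y t - μ * X t)
      (deriv (deriv Y) t + μ * deriv Y t - μ * deriv X t) t :=
    (h4.add (h2.const_mul μ)).sub (h1.const_mul μ)
  have hDE : HasDerivAt E
      ((1/2) * (2 * (deriv X t + μ * X t + μ * Y t) ^ 1 *
          (deriv (deriv X) t + μ * deriv X t + μ * deriv Y t))
        + (1/2) * (2 * (deriv Y t + μ * Y t - μ * X t) ^ 1 *
          (deriv (deriv Y) t + μ * deriv Y t - μ * deriv X t))
        + (1/2) * (2 * deriv X t ^ 1 * deriv (deriv X) t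
            + 2 * deriv Y t ^ 1 * deriv (deriv Y) t)
        + (1 + h) * (2 * X t ^ 1 * deriv X t + 2 * Y t ^ 1 * deriv Y t)) t := by
    rw [hEeq]
    exact ((((hA.pow 2).const_mul (1/2)).add ((hB.pow 2).const_mul (1/2))).add
      (((h3.pow 2).add (h4.pow 2)).const_mul (1/2))).add
      (((h1.pow 2).add (h2.pow 2)).const_mul (1+h))
  have hD := hDE.deriv
  have hμ' : μ ≠ 0 := ne_of_gt hμ
  have key : deriv E t = -μ * (1 + h) * ((X t) ^ 2 + (Y t) ^ 2)
      - μ * ((deriv X t) ^ 2 + (deriv Y t) ^ 2) := by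
    rw [hD, hdX t, hdY t, hq]
    field_simp
    ring
  refine ⟨key, ?_⟩
  rw [key]
  nlinarith [sq_nonneg (X t), sq_nonneg (Y t), sq_nonneg (deriv X t), sq_nonneg (deriv Y t),
    mul_pos hμ hh]
end

section
/- For the scalar quadratic game dynamics Ẍ = -qẎ - μẊ - hX - Y, Ÿ = qẊ - μẎ - hY + X with q = (2+μ²)/μ, and 0 ≤ ρ ≤ min{μ(1+h)/(μ²+μ+1+h), μ/(1+μ)}, the Lyapunov function E_t = ½(Ẋ+μX+μY)² + ½(Ẏ+μY-μX)² + ½(Ẋ²+Ẏ²) + (1+h)(X²+Y²) satisfies Ė_t ≤ -ρE_t, and hence X(t)² + Y(t)² ≤ (E_0/(1+h)) exp(-ρt). -/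
/-!
The derivative of the Lyapunov function along a trajectory is
`-μ (Ẋ² + Ẏ²) - μ (1 + h) (X² + Y²)`: the choice `q = (2 + μ²)/μ` is exactly what cancels the
cross terms `Ẋ Y`, `Ẏ X`. By `(a + μ b)² ≤ (1 + μ) a² + μ (1 + μ) b²` the energy is at most
`(1 + μ) (Ẋ² + Ẏ²) + (μ² + μ + 1 + h) (X² + Y²)`, so the bound on `ρ` gives `Ė ≤ -ρ E`, and
Grönwall's inequality together with `(1 + h) (X² + Y²) ≤ E` yields the decay of `X² + Y²`.
-/

open Real

theorem le_mul_exp_of_hasDerivAt_le_mul {f f' : ℝ → ℝ} {K : ℝ}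
    (hf : ∀ t, HasDerivAt f (f' t) t) (hbound : ∀ t, f' t ≤ K * f t) {a b : ℝ} (hab : a ≤ b) :
    f b ≤ f a * exp (K * (b - a)) := by
  have hderiv : ∀ t, HasDerivAt (fun s => f s * exp (-K * s))
      (exp (-K * t) * (f' t - K * f t)) t := by
    intro t
    have hexp : HasDerivAt (fun s => exp (-K * s)) (exp (-K * t) * -K) t := by
      simpa using ((hasDerivAt_id t).const_mul (-K)).exp
    exact ((hf t).mul hexp).congr_deriv (by ring)
  have hanti : Antitone fun s => f s * exp (-K * s) :=
    antitone_of_deriv_nonpos (fun t => (hderiv t).differentiableAt) fun t => by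
      rw [(hderiv t).deriv]
      exact mul_nonpos_of_nonneg_of_nonpos (exp_pos _).le (sub_nonpos.mpr (hbound t))
  have hab' : f b * exp (-K * b) ≤ f a * exp (-K * a) := hanti hab
  calc f b = f b * exp (-K * b) * exp (K * b) := by rw [mul_assoc, ← exp_add]; simp
    _ ≤ f a * exp (-K * a) * exp (K * b) := by gcongr
    _ = f a * exp (K * (b - a)) := by rw [mul_assoc, ← exp_add]; ring_nf

section LeadEnergy

variable (μ h : ℝ)

noncomputable def leadEnergy (x y u v : ℝ) : ℝ :=
  (1/2) * (u + μ * x + μ * y) ^ 2 + (1/2) * (v + μ * y - μ * x) ^ 2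
    + (1/2) * (u ^ 2 + v ^ 2) + (1 + h) * (x ^ 2 + y ^ 2)

variable {μ h}

theorem mul_sq_add_sq_le_leadEnergy (x y u v : ℝ) :
    (1 + h) * (x ^ 2 + y ^ 2) ≤ leadEnergy μ h x y u v := by
  unfold leadEnergy
  nlinarith [sq_nonneg (u + μ * x + μ * y), sq_nonneg (v + μ * y - μ * x), sq_nonneg u,
    sq_nonneg v]

theorem leadEnergy_le (hμ : 0 ≤ μ) (x y u v : ℝ) :
    leadEnergy μ h x y u v ≤ (1 + μ) * (u ^ 2 + v ^ 2) + (μ ^ 2 + μ + 1 + h) * (x ^ 2 + y ^ 2) := by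
  unfold leadEnergy
  nlinarith [mul_nonneg hμ (sq_nonneg (u - (x + y))), mul_nonneg hμ (sq_nonneg (v - (y - x))),
    mul_nonneg hμ (sq_nonneg u), mul_nonneg hμ (sq_nonneg v)]

theorem mul_leadEnergy_le_dissipation {ρ : ℝ} (hμ : 0 < μ) (hh : 0 < 1 + h) (hρ0 : 0 ≤ ρ)
    (hρ : ρ ≤ min (μ * (1 + h) / (μ ^ 2 + μ + 1 + h)) (μ / (1 + μ))) (x y u v : ℝ) :
    ρ * leadEnergy μ h x y u v ≤ μ * (u ^ 2 + v ^ 2) + μ * (1 + h) * (x ^ 2 + y ^ 2) := by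
  have hρ₁ : ρ * (μ ^ 2 + μ + 1 + h) ≤ μ * (1 + h) :=
    (le_div_iff₀ (by nlinarith [sq_nonneg μ])).mp (le_min_iff.mp hρ).1
  have hρ₂ : ρ * (1 + μ) ≤ μ := (le_div_iff₀ (by positivity)).mp (le_min_iff.mp hρ).2
  calc ρ * leadEnergy μ h x y u v
      ≤ ρ * ((1 + μ) * (u ^ 2 + v ^ 2) + (μ ^ 2 + μ + 1 + h) * (x ^ 2 + y ^ 2)) :=
        mul_le_mul_of_nonneg_left (leadEnergy_le hμ.le x y u v) hρ0
    _ = ρ * (1 + μ) * (u ^ 2 + v ^ 2) + ρ * (μ ^ 2 + μ + 1 + h) * (x ^ 2 + y ^ 2) := by ring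
    _ ≤ μ * (u ^ 2 + v ^ 2) + μ * (1 + h) * (x ^ 2 + y ^ 2) := by gcongr

theorem hasDerivAt_leadEnergy {q : ℝ} (hμ : μ ≠ 0) (hq : q = (2 + μ ^ 2) / μ)
    {X Y X' Y' : ℝ → ℝ} {t : ℝ} (hX : HasDerivAt X (X' t) t) (hY : HasDerivAt Y (Y' t) t)
    (hX' : HasDerivAt X' (-q * Y' t - μ * X' t - h * X t - Y t) t)
    (hY' : HasDerivAt Y' (q * X' t - μ * Y' t - h * Y t + X t) t) :
    HasDerivAt (fun s => leadEnergy μ h (X s) (Y s) (X' s) (Y' s))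
      (-μ * (X' t ^ 2 + Y' t ^ 2) - μ * (1 + h) * (X t ^ 2 + Y t ^ 2)) t := by
  have hE :=
    (((((hX'.add (hX.const_mul μ)).add (hY.const_mul μ)).pow 2).const_mul (1/2 : ℝ)).add
      ((((hY'.add (hY.const_mul μ)).sub (hX.const_mul μ)).pow 2).const_mul (1/2 : ℝ))).add
      (((hX'.pow 2).add (hY'.pow 2)).const_mul (1/2 : ℝ)) |>.add
      (((hX.pow 2).add (hY.pow 2)).const_mul (1 + h))
  refine hE.congr_deriv ?_
  simp only [Pi.add_apply, Pi.sub_apply]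
  subst hq
  field_simp
  ring

end LeadEnergy

/-- Linear convergence of the continuous-time LEAD dynamics on the scalar quadratic
game: with q = (2+μ²)/μ and 0 ≤ ρ ≤ min{μ(1+h)/(μ²+μ+1+h), μ/(1+μ)},
Ė_t ≤ -ρE_t and hence X(t)² + Y(t)² ≤ (E_0/(1+h)) exp(-ρt). -/
theorem lead_quadratic_linear_convergence
    (h μ q : ℝ) (hh : 0 < h) (hμ : 0 < μ) (hq : q = (2 + μ ^ 2) / μ)
    (X Y : ℝ → ℝ) (hX : ContDiff ℝ 2 X) (hY : ContDiff ℝ 2 Y)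
    (hdX : ∀ t : ℝ, deriv (deriv X) t =
      -q * deriv Y t - μ * deriv X t - h * X t - Y t)
    (hdY : ∀ t : ℝ, deriv (deriv Y) t =
      q * deriv X t - μ * deriv Y t - h * Y t + X t)
    (E : ℝ → ℝ)
    (hE : ∀ t : ℝ, E t =
      (1/2) * (deriv X t + μ * X t + μ * Y t) ^ 2
        + (1/2) * (deriv Y t + μ * Y t - μ * X t) ^ 2
        + (1/2) * ((deriv X t) ^ 2 + (deriv Y t) ^ 2)
        + (1 + h) * ((X t) ^ 2 + (Y t) ^ 2))
    (ρ : ℝ) (hρ0 : 0 ≤ ρ)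
    (hρ : ρ ≤ min (μ * (1 + h) / (μ ^ 2 + μ + 1 + h)) (μ / (1 + μ))) :
    (∀ t : ℝ, deriv E t ≤ -ρ * E t) ∧
    (∀ t : ℝ, 0 ≤ t →
      (X t) ^ 2 + (Y t) ^ 2 ≤ (E 0 / (1 + h)) * Real.exp (-ρ * t)) := by
  have hh₁ : 0 < 1 + h := by linarith
  have hEt : ∀ t, E t = leadEnergy μ h (X t) (Y t) (deriv X t) (deriv Y t) := hE
  have hEeq : E = fun t => leadEnergy μ h (X t) (Y t) (deriv X t) (deriv Y t) := funext hEt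
  have hEderiv : ∀ t, HasDerivAt E
      (-μ * (deriv X t ^ 2 + deriv Y t ^ 2) - μ * (1 + h) * (X t ^ 2 + Y t ^ 2)) t := by
    intro t
    rw [hEeq]
    refine hasDerivAt_leadEnergy hμ.ne' hq (hX.differentiable two_ne_zero t).hasDerivAt
      (hY.differentiable two_ne_zero t).hasDerivAt ?_ ?_
    · simpa only [hdX] using (hX.differentiable_deriv_two t).hasDerivAt
    · simpa only [hdY] using (hY.differentiable_deriv_two t).hasDerivAt
  have hdecay : ∀ t, deriv E t ≤ -ρ * E t := fun t => by
    rw [(hEderiv t).deriv, hEt t]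
    linarith [mul_leadEnergy_le_dissipation hμ hh₁ hρ0 hρ (X t) (Y t) (deriv X t) (deriv Y t)]
  refine ⟨hdecay, fun t ht => ?_⟩
  have hgronwall :=
    le_mul_exp_of_hasDerivAt_le_mul (fun s => (hEderiv s).differentiableAt.hasDerivAt) hdecay ht
  rw [sub_zero] at hgronwall
  rw [div_mul_eq_mul_div, le_div_iff₀ hh₁, mul_comm]
  calc (1 + h) * (X t ^ 2 + Y t ^ 2) ≤ E t := hEt t ▸ mul_sq_add_sq_le_leadEnergy _ _ _ _
    _ ≤ E 0 * exp (-ρ * t) := hgronwall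
end

section
/- For the gradient descent-ascent operator on the bilinear game, with Jacobian I - η∇v where ∇v = [[0,A],[-Aᵀ,0]], every eigenvalue has the form 1 - ηλ with λ purely imaginary and nonzero (for A invertible), and hence has modulus |1 - ηλ| = √(1 + η²|λ|²) > 1 for any η > 0. Therefore the spectral radius of the GDA update operator exceeds 1 for every positive learning rate. -/
/-!
Complexify: an eigenvector `z` of `I - η∇v` with eigenvalue `c` is an eigenvector of `∇v` with
eigenvalue `λ = (1 - c) / η`. Since `∇v` is real and skew-symmetric, `z* ∇v z = λ ‖z‖²` is equal to
minus its own conjugate, so `λ` is purely imaginary; since `A` is invertible, so is `∇v`, hence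
`λ ≠ 0`. Then `|1 - ηλ|² = 1 + η²|λ|² > 1`.
-/

open Matrix

namespace Matrix

variable {ι : Type*} [Fintype ι]

open scoped ComplexOrder in
theorem re_eq_zero_of_mulVec_eq_smul_of_conjTranspose_eq_neg {𝕜 : Type*} [RCLike 𝕜]
    {M : Matrix ι ι 𝕜} (hM : Mᴴ = -M) {z : ι → 𝕜} (hz : z ≠ 0) {μ : 𝕜}
    (h : M *ᵥ z = μ • z) : RCLike.re μ = 0 := by
  have hleft : star z ⬝ᵥ (M *ᵥ z) = μ * (star z ⬝ᵥ z) := by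
    rw [h, dotProduct_smul, smul_eq_mul]
  have hright : star z ⬝ᵥ (M *ᵥ z) = -star μ * (star z ⬝ᵥ z) := by
    rw [dotProduct_mulVec, ← conjTranspose_conjTranspose M, ← star_mulVec, hM, neg_mulVec, h,
      star_neg, star_smul, neg_dotProduct, smul_dotProduct, smul_eq_mul, neg_mul]
  have hsum : (μ + star μ) * (star z ⬝ᵥ z) = 0 := by linear_combination hright - hleft
  have hμ : μ + star μ = 0 :=
    (mul_eq_zero.mp hsum).resolve_right (dotProduct_star_self_eq_zero.not.mpr hz)
  rw [RCLike.star_def, RCLike.add_conj] at hμ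
  simpa using hμ

omit [Fintype ι] in
theorem conjTranspose_map_ofReal_eq_neg {M : Matrix ι ι ℝ} (hM : Mᵀ = -M) :
    (M.map ((↑) : ℝ → ℂ))ᴴ = -M.map ((↑) : ℝ → ℂ) := by
  rw [← conjTranspose_map _ (fun _ => (Complex.conj_ofReal _).symm),
    conjTranspose_eq_transpose_of_trivial, hM, Matrix.map_neg _ Complex.ofReal_neg]

omit [Fintype ι] in
theorem map_ofReal_one_sub_smul [DecidableEq ι] (M : Matrix ι ι ℝ) (η : ℝ) :
    (1 - η • M).map ((↑) : ℝ → ℂ) = 1 - (η : ℂ) • M.map ((↑) : ℝ → ℂ) := by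
  rw [Matrix.map_sub, Matrix.map_one, Matrix.map_smul'] <;> simp

theorem mulVec_eq_smul_of_one_sub_smul_mulVec_eq_smul {K : Type*} [Field K] [DecidableEq ι]
    {M : Matrix ι ι K} {η c : K} (hη : η ≠ 0) {z : ι → K} (h : (1 - η • M) *ᵥ z = c • z) :
    M *ᵥ z = ((1 - c) / η) • z := by
  rw [sub_mulVec, one_mulVec, smul_mulVec, sub_eq_iff_eq_add, ← sub_eq_iff_eq_add'] at h
  rw [div_eq_inv_mul, mul_smul, sub_smul, one_smul, h, inv_smul_smul₀ hη]

theorem mulVec_map_injective {K L : Type*} [Field K] [Field L] [DecidableEq ι] (f : K →+* L)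
    {M : Matrix ι ι K} (hM : IsUnit M.det) : Function.Injective (M.map f).mulVec := by
  rw [mulVec_injective_iff_isUnit, isUnit_iff_isUnit_det, ← RingHom.mapMatrix_apply,
    ← RingHom.map_det]
  exact hM.map f

theorem transpose_fromBlocks_zero_neg_transpose {m n R : Type*} [AddGroup R] (A : Matrix m n R) :
    (fromBlocks 0 A (-Aᵀ) 0)ᵀ = -fromBlocks 0 A (-Aᵀ) 0 := by
  rw [fromBlocks_transpose, fromBlocks_neg]
  simp

theorem mulVec_fromBlocks_zero_injective {m n R : Type*} [Fintype m] [Fintype n]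
    [NonUnitalNonAssocSemiring R] {A : Matrix m n R} {B : Matrix n m R}
    (hA : Function.Injective A.mulVec) (hB : Function.Injective B.mulVec) :
    Function.Injective (fromBlocks 0 A B 0).mulVec := by
  intro x y hxy
  simp only [fromBlocks_mulVec, zero_mulVec, zero_add, add_zero, Sum.elim_eq_iff] at hxy
  ext (i | i)
  · exact congrFun (hB hxy.2) i
  · exact congrFun (hA hxy.1) i

end Matrix

theorem Complex.norm_one_sub_ofReal_mul {lam : ℂ} (hlam : lam.re = 0) (η : ℝ) :
    ‖1 - η * lam‖ = √(1 + η ^ 2 * ‖lam‖ ^ 2) := by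
  rw [Complex.norm_def, Complex.sq_norm, Complex.normSq_apply, Complex.normSq_apply]
  simp [hlam]
  ring_nf

theorem Complex.one_lt_norm_one_sub_ofReal_mul {lam : ℂ} (hlam : lam.re = 0) {η : ℝ} (hη : η ≠ 0)
    (hne : lam ≠ 0) : 1 < ‖1 - η * lam‖ := by
  rw [Complex.norm_one_sub_ofReal_mul hlam, Real.lt_sqrt zero_le_one]
  have : 0 < ‖lam‖ := norm_pos_iff.mpr hne
  nlinarith [pow_pos this 2, pow_pos (abs_pos.mpr hη) 2, sq_abs η]

/-- Every eigenvalue of the GDA update Jacobian I - η∇v for the bilinear game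
(with A invertible) has the form 1 - ηλ with λ purely imaginary and nonzero, hence
modulus √(1+η²|λ|²) > 1: the spectral radius of GDA exceeds 1 for every η > 0. -/
theorem gda_spectral_radius_exceeds_one
    (n : ℕ) (A : Matrix (Fin n) (Fin n) ℝ) (hA : IsUnit A.det)
    (η : ℝ) (hη : 0 < η) (c : ℂ)
    (hc : ∃ z : (Fin n ⊕ Fin n) → ℂ, z ≠ 0 ∧
      (((1 : Matrix (Fin n ⊕ Fin n) (Fin n ⊕ Fin n) ℝ)
          - η • Matrix.fromBlocks 0 A (-Aᵀ) 0).map (Complex.ofReal)).mulVec z = c • z) :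
    ∃ lam : ℂ, lam.re = 0 ∧ lam ≠ 0 ∧ c = 1 - η * lam ∧
      ‖c‖ = Real.sqrt (1 + η ^ 2 * ‖lam‖ ^ 2) ∧
      1 < ‖c‖ := by
  obtain ⟨z, hz, hcz⟩ := hc
  have hηC : (η : ℂ) ≠ 0 := Complex.ofReal_ne_zero.mpr hη.ne'
  rw [map_ofReal_one_sub_smul] at hcz
  have hlam := mulVec_eq_smul_of_one_sub_smul_mulVec_eq_smul hηC hcz
  set lam := (1 - c) / η
  have hre : lam.re = 0 := re_eq_zero_of_mulVec_eq_smul_of_conjTranspose_eq_neg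
    (conjTranspose_map_ofReal_eq_neg (transpose_fromBlocks_zero_neg_transpose A)) hz hlam
  have hinj : Function.Injective (fromBlocks 0 A (-Aᵀ) 0 |>.map ((↑) : ℝ → ℂ)).mulVec := by
    rw [fromBlocks_map, Matrix.map_zero _ Complex.ofReal_zero]
    refine mulVec_fromBlocks_zero_injective
      (mulVec_map_injective Complex.ofRealHom hA) (mulVec_map_injective Complex.ofRealHom ?_)
    rw [det_neg, det_transpose]
    exact ((isUnit_neg_one (α := ℝ)).pow _).mul hA
  have hne : lam ≠ 0 := by
    rintro hzero
    rw [hzero, zero_smul] at hlam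
    exact hz (hinj (hlam.trans (mulVec_zero _).symm))
  have hc_eq : c = 1 - η * lam := by rw [mul_div_cancel₀ _ hηC]; ring
  rw [hc_eq]
  exact ⟨lam, hre, hne, rfl, Complex.norm_one_sub_ofReal_mul hre η,
    Complex.one_lt_norm_one_sub_ofReal_mul hre hη.ne' hne⟩
end

section
/- Let λ = iξ with ξ > 0, and for α, η real define μ₊(α) = 1 - ηλ + αλ(ηλ/(1-ηλ)) (the first-order expansion of the LEAD eigenvalue in α with β = 0). Then the derivative with respect to α at α = 0 of ρ(α) = |μ₊(α)|² equals (2η/|1-ηλ|²)(η²ξ⁴ - ξ²), which is negative if and only if η ∈ (0, 1/ξ). -/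
/-!
Since `μ₊(α) = a + α c` is affine in `α`, with `a = 1 - ηλ` and `c = ηλ²/a`, the derivative of
`|μ₊|²` at `0` is `2 Re (c ā) = 2ηξ² Re(-ā²)/|a|² = (2η/|a|²)(η²ξ⁴ - ξ²)`. Its sign is that of
`(ηξ)² - 1`.
-/

open Complex ComplexConjugate

theorem hasDerivAt_normSq_add_mul (a b : ℂ) (x : ℝ) :
    HasDerivAt (fun t : ℝ => normSq (a + t * b)) (2 * (b * conj (a + x * b)).re) x := by
  have hline : HasDerivAt (fun t : ℝ => a + t * b) b x := by
    simpa using ((hasDerivAt_id x).ofReal_comp.mul_const b).const_add a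
  simpa [normSq_eq_norm_sq, Complex.inner] using hline.norm_sq

theorem two_mul_re_perturbation_mul_conj (η ξ : ℝ) :
    2 * ((ξ * I) ^ 2 * η / (1 - η * (ξ * I)) * conj (1 - η * (ξ * I))).re
      = 2 * η / normSq (1 - η * (ξ * I)) * (η ^ 2 * ξ ^ 4 - ξ ^ 2) := by
  simp [div_re, div_im, normSq_apply, mul_pow, ← ofReal_pow]
  field_simp
  ring

theorem sq_mul_pow_four_sub_sq_neg_iff {η ξ : ℝ} (hη : 0 < η) (hξ : 0 < ξ) :
    η ^ 2 * ξ ^ 4 - ξ ^ 2 < 0 ↔ η < 1 / ξ :=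
  calc η ^ 2 * ξ ^ 4 - ξ ^ 2 < 0
      ↔ ξ ^ 2 * ((η * ξ) ^ 2 - 1) < 0 := by ring_nf
    _ ↔ (η * ξ) ^ 2 - 1 < 0 := smul_neg_iff_of_pos_left (by positivity : 0 < ξ ^ 2)
    _ ↔ η * ξ < 1 := by rw [sub_neg, sq_lt_one_iff₀ (by positivity)]
    _ ↔ η < 1 / ξ := (lt_div_iff₀ hξ).symm

/-- With λ = iξ (ξ > 0) and μ₊(α) = (1-ηλ) + αηλ²/(1-ηλ), the derivative of
ρ(α) = |μ₊(α)|² at α = 0 equals (2η/|1-ηλ|²)(η²ξ⁴ - ξ²), which is negative iff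
η ∈ (0, 1/ξ). -/
theorem lead_eigenvalue_derivative_at_zero
    (ξ η : ℝ) (hξ : 0 < ξ) (hη : 0 < η) (lam : ℂ) (hlam : lam = ξ * Complex.I) :
    HasDerivAt (fun α : ℝ =>
        Complex.normSq ((1 - (η : ℂ) * lam) + (α : ℂ) * lam ^ 2 * (η : ℂ) / (1 - (η : ℂ) * lam)))
      ((2 * η / Complex.normSq (1 - (η : ℂ) * lam)) * (η ^ 2 * ξ ^ 4 - ξ ^ 2)) 0 ∧
    ((2 * η / Complex.normSq (1 - (η : ℂ) * lam)) * (η ^ 2 * ξ ^ 4 - ξ ^ 2) < 0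
      ↔ η ∈ Set.Ioo (0 : ℝ) (1 / ξ)) := by
  subst hlam
  constructor
  · convert hasDerivAt_normSq_add_mul (1 - η * (ξ * I)) ((ξ * I) ^ 2 * η / (1 - η * (ξ * I))) 0
      using 1
    · funext α
      ring_nf
    · simp only [ofReal_zero, zero_mul, add_zero, two_mul_re_perturbation_mul_conj]
  · have hcoef : 0 < 2 * η / normSq (1 - η * (ξ * I)) := by
      simp [normSq_apply]
      positivity
    rw [Set.mem_Ioo, and_iff_right hη, ← sq_mul_pow_four_sub_sq_neg_iff hη hξ]
    exact smul_neg_iff_of_pos_left hcoef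
end

section
/- Let λ = ±iσ with σ > 0, and set η = α = 1/(2σ_max). Then the roots μ_± of X² - X(1 - (η+α)λ) - αλ = 0 satisfy |μ_±|² = 1/2 ± (1/2)√(1 - σ²/σ_max²), provided σ ≤ σ_max. In particular max{|μ₊|², |μ₋|²} = 1/2 + (1/2)√(1 - σ²/σ_max²) < 1 when σ > 0. -/
/-- With λ = ±iσ (0 < σ ≤ σ_max) and η = α = 1/(2σ_max), the roots of
X² - (1-(η+α)λ)X - αλ = 0 have squared moduli 1/2 ± (1/2)√(1-σ²/σ_max²), and the
larger one is strictly less than 1. -/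
theorem lead_roots_modulus
    (σ σmax : ℝ) (hσ : 0 < σ) (hσle : σ ≤ σmax)
    (η α : ℝ) (hη : η = 1 / (2 * σmax)) (hα : α = 1 / (2 * σmax))
    (lam : ℂ) (hlam : lam = σ * Complex.I ∨ lam = -(σ * Complex.I)) :
    (∀ μ : ℂ, μ ^ 2 - (1 - ((η : ℂ) + (α : ℂ)) * lam) * μ - (α : ℂ) * lam = 0 →
      Complex.normSq μ = 1/2 + (1/2) * Real.sqrt (1 - σ ^ 2 / σmax ^ 2) ∨
      Complex.normSq μ = 1/2 - (1/2) * Real.sqrt (1 - σ ^ 2 / σmax ^ 2)) ∧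
    1/2 + (1/2) * Real.sqrt (1 - σ ^ 2 / σmax ^ 2) < 1 := by
  have hm : 0 < σmax := lt_of_lt_of_le hσ hσle
  have hm' : σmax ≠ 0 := ne_of_gt hm
  have hd : 0 ≤ 1 - σ ^ 2 / σmax ^ 2 := by
    have h1 : σ ^ 2 ≤ σmax ^ 2 := by nlinarith
    have h2 : σ ^ 2 / σmax ^ 2 ≤ 1 := by
      rw [div_le_one (by positivity)]; exact h1
    linarith
  have hr2 : Real.sqrt (1 - σ ^ 2 / σmax ^ 2) ^ 2 = 1 - σ ^ 2 / σmax ^ 2 :=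
    Real.sq_sqrt hd
  set r := Real.sqrt (1 - σ ^ 2 / σmax ^ 2) with hrdef
  have hrnn : 0 ≤ r := Real.sqrt_nonneg _
  have hrlt : r < 1 := by
    have h0 : 0 < σ ^ 2 / σmax ^ 2 := by positivity
    nlinarith
  refine ⟨?_, by linarith⟩
  intro μ hμ
  have hI : Complex.I ^ 2 = -1 := Complex.I_sq
  have hr2c : (r : ℂ) ^ 2 = 1 - (σ : ℂ) ^ 2 / (σmax : ℂ) ^ 2 := by
    exact_mod_cast hr2
  have hmc : (σmax : ℂ) ≠ 0 := by exact_mod_cast hm'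
  subst hη hα
  push_cast at hμ
  obtain hlam | hlam := hlam <;> subst hlam
  · have hfac : (μ - ((1 + (r : ℂ)) / 2 - (σ : ℂ) / (2 * (σmax : ℂ)) * Complex.I)) *
        (μ - ((1 - (r : ℂ)) / 2 - (σ : ℂ) / (2 * (σmax : ℂ)) * Complex.I)) = 0 := by
      linear_combination hμ - (1 / 4) * hr2c + ((σ : ℂ) ^ 2 / (4 * (σmax : ℂ) ^ 2)) * hI
    rcases mul_eq_zero.mp hfac with h | h
    · left
      have hμe : μ = (((1 + r) / 2 : ℝ) : ℂ) + ((-(σ / (2 * σmax)) : ℝ) : ℂ) * Complex.I := by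
        have := sub_eq_zero.mp h
        rw [this]; push_cast; ring
      rw [hμe, Complex.normSq_add_mul_I]
      linear_combination (1 / 4) * hr2
    · right
      have hμe : μ = (((1 - r) / 2 : ℝ) : ℂ) + ((-(σ / (2 * σmax)) : ℝ) : ℂ) * Complex.I := by
        have := sub_eq_zero.mp h
        rw [this]; push_cast; ring
      rw [hμe, Complex.normSq_add_mul_I]
      linear_combination (1 / 4) * hr2
  · have hfac : (μ - ((1 + (r : ℂ)) / 2 + (σ : ℂ) / (2 * (σmax : ℂ)) * Complex.I)) *
        (μ - ((1 - (r : ℂ)) / 2 + (σ : ℂ) / (2 * (σmax : ℂ)) * Complex.I)) = 0 := by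
      linear_combination hμ - (1 / 4) * hr2c + ((σ : ℂ) ^ 2 / (4 * (σmax : ℂ) ^ 2)) * hI
    rcases mul_eq_zero.mp hfac with h | h
    · left
      have hμe : μ = (((1 + r) / 2 : ℝ) : ℂ) + ((σ / (2 * σmax) : ℝ) : ℂ) * Complex.I := by
        have := sub_eq_zero.mp h
        rw [this]; push_cast; ring
      rw [hμe, Complex.normSq_add_mul_I]
      linear_combination (1 / 4) * hr2
    · right
      have hμe : μ = (((1 - r) / 2 : ℝ) : ℂ) + ((σ / (2 * σmax) : ℝ) : ℂ) * Complex.I := by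
        have := sub_eq_zero.mp h
        rw [this]; push_cast; ring
      rw [hμe, Complex.normSq_add_mul_I]
      linear_combination (1 / 4) * hr2
end

section
/- With η = α = 1/(2σ_max(A)) and β = 0, the spectral radius of the LEAD update Jacobian ∇F_LEAD for the bilinear game f(X,Y) = XᵀAY equals √(1/2 + (1/2)√(1 - σ_min(A)²/σ_max(A)²)), which is strictly less than 1 whenever σ_min(A) > 0. -/
/-!
An eigenvector `(x, y)` of `∇F_LEAD` has `x = μ y`, and `y` is an eigenvector of `∇v` for an
eigenvalue `ν` with `μ² - μ = α (1 - 2μ) ν`. Since `A` is invertible, `ν² = -σ²` for a singular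
value `σ` of `A`. Completing the square gives `2μ - 1 + 2αν = ±√(1 - σ²/σ_max²)`, and as `ν` is
purely imaginary, `|μ|² = (1 ± √(1 - σ²/σ_max²)) / 2`. This is largest for `σ = σ_min` and the
sign `+`, and both are realised.
-/

open Matrix

theorem Sum.smul_elim {M R α β : Type*} [SMul M R] (c : M) (x : α → R) (y : β → R) :
    c • Sum.elim x y = Sum.elim (c • x) (c • y) := by
  ext (i | i) <;> rfl

section Lead

variable {R : Type*} [CommRing R] {ι : Type*} [DecidableEq ι]

/-- `∇F_LEAD` for `β = 0`, with `J` in the role of `∇v`. -/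
def leadJacobian (η α : R) (J : Matrix ι ι R) : Matrix (ι ⊕ ι) (ι ⊕ ι) R :=
  fromBlocks (1 - (η + α) • J) (α • J) 1 0

theorem leadJacobian_map {S : Type*} [CommRing S] (f : R →+* S) (η α : R) (J : Matrix ι ι R) :
    (leadJacobian η α J).map f = leadJacobian (f η) (f α) (J.map f) := by
  simp [leadJacobian, fromBlocks_map, Matrix.map_sub, map_smul' _ _ _ (map_mul f)]

variable [Fintype ι]

theorem leadJacobian_mulVec_eq_smul_iff (η α μ : R) (J : Matrix ι ι R) (x y : ι → R) :
    leadJacobian η α J *ᵥ Sum.elim x y = μ • Sum.elim x y ↔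
      x = μ • y ∧ (α - (η + α) * μ) • (J *ᵥ y) = (μ ^ 2 - μ) • y := by
  simp only [leadJacobian, fromBlocks_mulVec, Sum.elim_comp_inl, Sum.elim_comp_inr, Sum.smul_elim,
    Sum.elim_eq_iff, one_mulVec, zero_mulVec, add_zero, sub_mulVec, smul_mulVec]
  constructor
  · rintro ⟨htop, rfl⟩
    refine ⟨rfl, ?_⟩
    rw [mulVec_smul] at htop
    linear_combination (norm := module) htop
  · rintro ⟨rfl, h⟩
    refine ⟨?_, rfl⟩
    rw [mulVec_smul]
    linear_combination (norm := module) h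

theorem leadJacobian_mulVec_of_mulVec_eq_smul {η α μ ν : R} {J : Matrix ι ι R} {y : ι → R}
    (hy : J *ᵥ y = ν • y) (hμ : μ ^ 2 - μ = (α - (η + α) * μ) * ν) :
    leadJacobian η α J *ᵥ Sum.elim (μ • y) y = μ • Sum.elim (μ • y) y := by
  rw [leadJacobian_mulVec_eq_smul_iff, hy, smul_smul, hμ]
  exact ⟨rfl, by rw [mul_comm]⟩

theorem exists_mulVec_eq_smul_of_leadJacobian {K : Type*} [Field K] {a μ : K} (ha : a ≠ 0)
    {J : Matrix ι ι K} {z : ι ⊕ ι → K} (hz : z ≠ 0) (h : leadJacobian a a J *ᵥ z = μ • z) :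
    ∃ y ≠ 0, ∃ ν, J *ᵥ y = ν • y ∧ μ ^ 2 - μ = (a - 2 * a * μ) * ν := by
  rw [← Sum.elim_comp_inl_inr z, leadJacobian_mulVec_eq_smul_iff, ← two_mul] at h
  obtain ⟨hx, hy⟩ := h
  set y := z ∘ Sum.inr
  have hy0 : y ≠ 0 := by
    rintro hy0
    rw [hy0, smul_zero] at hx
    apply hz
    ext (i | i)
    exacts [congrFun hx i, congrFun hy0 i]
  -- `a - 2aμ = 0` forces `μ = 1/2`, which is not a root of `μ² = μ`.
  have hc : a - 2 * a * μ ≠ 0 := by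
    intro hc
    rw [hc, zero_smul, eq_comm, smul_eq_zero_iff_left hy0] at hy
    have h2μ : 1 - 2 * μ = 0 :=
      (mul_eq_zero.mp (by linear_combination hc : a * (1 - 2 * μ) = 0)).resolve_left ha
    exact one_ne_zero (α := K) (by linear_combination (1 - 2 * μ) * h2μ - 4 * hy)
  refine ⟨y, hy0, (μ ^ 2 - μ) / (a - 2 * a * μ), ?_, (mul_div_cancel₀ _ hc).symm⟩
  rw [div_eq_inv_mul, mul_smul, ← hy, inv_smul_smul₀ hc]

end Lead

section Bilinear

variable {R : Type*} [CommRing R] {m : Type*}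

/-- `∇v` for the bilinear game `f(x, y) = xᵀ B y`. -/
def bilinearJacobian (B : Matrix m m R) : Matrix (m ⊕ m) (m ⊕ m) R :=
  fromBlocks 0 B (-Bᵀ) 0

theorem bilinearJacobian_map {S : Type*} [CommRing S] (f : R →+* S) (B : Matrix m m R) :
    (bilinearJacobian B).map f = bilinearJacobian (B.map f) := by
  simp [bilinearJacobian, fromBlocks_map, Matrix.map_neg _ (map_neg f), transpose_map]

variable [Fintype m]

theorem bilinearJacobian_mulVec_eq_smul_iff (B : Matrix m m R) (ν : R) (u v : m → R) :
    bilinearJacobian B *ᵥ Sum.elim u v = ν • Sum.elim u v ↔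
      B *ᵥ v = ν • u ∧ -(Bᵀ *ᵥ u) = ν • v := by
  simp [bilinearJacobian, fromBlocks_mulVec, Sum.smul_elim, neg_mulVec, Sum.elim_eq_iff]

theorem exists_transpose_mul_self_mulVec_of_bilinearJacobian [DecidableEq m] {B : Matrix m m R}
    (hB : IsUnit B.det) {ν : R} {y : m ⊕ m → R} (hy : y ≠ 0)
    (h : bilinearJacobian B *ᵥ y = ν • y) :
    ∃ v ≠ 0, (Bᵀ * B) *ᵥ v = (-ν ^ 2) • v := by
  rw [← Sum.elim_comp_inl_inr y, bilinearJacobian_mulVec_eq_smul_iff] at h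
  obtain ⟨hu, hv⟩ := h
  refine ⟨y ∘ Sum.inr, fun hv0 ↦ hy ?_, ?_⟩
  · have hu0 : y ∘ Sum.inl = 0 := by
      apply mulVec_injective_of_isUnit ((isUnit_iff_isUnit_det _).mpr (by rwa [det_transpose]))
      rw [hv0, smul_zero, neg_eq_zero] at hv
      rw [hv, mulVec_zero]
    ext (i | i)
    exacts [congrFun hu0 i, congrFun hv0 i]
  · rw [← mulVec_mulVec, hu, mulVec_smul, ← neg_neg (Bᵀ *ᵥ _), hv]
    module

theorem bilinearJacobian_mulVec_of_transpose_mul_self_mulVec {K : Type*} [Field K]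
    {B : Matrix m m K} {ν : K} (hν : ν ≠ 0) {w : m → K} (hw : (Bᵀ * B) *ᵥ w = (-ν ^ 2) • w) :
    bilinearJacobian B *ᵥ Sum.elim (ν⁻¹ • B *ᵥ w) w = ν • Sum.elim (ν⁻¹ • B *ᵥ w) w := by
  rw [bilinearJacobian_mulVec_eq_smul_iff, smul_inv_smul₀ hν, mulVec_smul, mulVec_mulVec, hw]
  refine ⟨rfl, ?_⟩
  rw [smul_smul, ← neg_smul]
  congr 1
  field_simp

end Bilinear

section Spectral

open scoped ComplexOrder

variable {m : Type*} [Fintype m]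

theorem Matrix.exists_mulVec_eq_smul_of_map [DecidableEq m] {K L : Type*} [Field K] [Field L]
    (f : K →+* L) {M : Matrix m m K} {t : K} {v : m → L} (hv : v ≠ 0)
    (h : M.map f *ᵥ v = f t • v) :
    ∃ w ≠ 0, M *ᵥ w = t • w := by
  have hdet : ((M - t • 1).map f).det = 0 := by
    refine exists_mulVec_eq_zero_iff.mp ⟨v, hv, ?_⟩
    have hmap : (M - t • 1).map f = M.map f - f t • 1 := by
      simp [Matrix.map_sub, map_smul' _ _ _ (map_mul f), Matrix.map_one _ f.map_zero f.map_one]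
    rw [hmap, sub_mulVec, h, smul_mulVec, one_mulVec, sub_self]
  rw [← f.mapMatrix_apply, ← f.map_det, map_eq_zero] at hdet
  obtain ⟨w, hw, hw0⟩ := exists_mulVec_eq_zero_iff.mpr hdet
  exact ⟨w, hw, by rwa [sub_mulVec, smul_mulVec, one_mulVec, sub_eq_zero] at hw0⟩

theorem Matrix.PosSemidef.nonneg_of_mulVec_eq_smul {𝕜 : Type*} [RCLike 𝕜] {M : Matrix m m 𝕜}
    (hM : M.PosSemidef) {t : 𝕜} {v : m → 𝕜} (hv : v ≠ 0) (h : M *ᵥ v = t • v) : 0 ≤ t := by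
  have hpos : 0 < star v ⬝ᵥ v := dotProduct_star_self_pos_iff.mpr hv
  have hnonneg := hM.dotProduct_mulVec_nonneg v
  rw [h, dotProduct_smul, smul_eq_mul] at hnonneg
  simpa [hpos.ne'] using mul_nonneg hnonneg (inv_pos.mpr hpos).le

variable {n : Type*}

theorem map_ofReal_transpose_mul_self (A : Matrix m n ℝ) :
    (A.map Complex.ofReal)ᵀ * A.map Complex.ofReal = (Aᵀ * A).map Complex.ofReal := by
  rw [← transpose_map]
  exact (Matrix.map_mul (f := Complex.ofRealHom)).symm

variable [Fintype n]

def singularValues (A : Matrix m n ℝ) : Set ℝ :=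
  {σ | 0 ≤ σ ∧ ∃ w : n → ℝ, w ≠ 0 ∧ (Aᵀ * A) *ᵥ w = σ ^ 2 • w}

theorem exists_mem_singularValues_of_mulVec_eq_smul [DecidableEq n] {A : Matrix m n ℝ} {t : ℂ}
    {v : n → ℂ} (hv : v ≠ 0)
    (h : ((A.map Complex.ofReal)ᵀ * A.map Complex.ofReal) *ᵥ v = t • v) :
    ∃ σ ∈ singularValues A, t = (σ : ℂ) ^ 2 := by
  have hT : (A.map Complex.ofReal)ᴴ = (A.map Complex.ofReal)ᵀ := by ext; simp
  have hpsd := posSemidef_conjTranspose_mul_self (A.map Complex.ofReal)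
  rw [hT] at hpsd
  obtain ⟨hre, him⟩ := Complex.nonneg_iff.mp (hpsd.nonneg_of_mulVec_eq_smul hv h)
  have ht : t = Complex.ofRealHom (√t.re ^ 2) := by
    rw [Real.sq_sqrt hre]
    exact Complex.ext rfl him.symm
  rw [ht, map_ofReal_transpose_mul_self] at h
  obtain ⟨w, hw, hw'⟩ := exists_mulVec_eq_smul_of_map Complex.ofRealHom hv h
  exact ⟨√t.re, ⟨Real.sqrt_nonneg _, w, hw, hw'⟩, by simpa using ht⟩

end Spectral

section LeadRoot

open Complex

variable {a σ : ℝ}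

/- `μ ^ 2 - μ = (a - 2 * a * μ) * ν` says that `μ` is a root of `X² - (1 - 2aν)X - aν`, the
characteristic polynomial of `∇F_LEAD` on the `ν`-eigenspace of `∇v`. -/

theorem norm_le_of_lead_root (hσ : (2 * a * σ) ^ 2 ≤ 1) {μ ν : ℂ} (hν : ν ^ 2 = -(σ : ℂ) ^ 2)
    (hμ : μ ^ 2 - μ = (a - 2 * a * μ) * ν) :
    ‖μ‖ ≤ √(1 / 2 + 1 / 2 * √(1 - (2 * a * σ) ^ 2)) := by
  set d := √(1 - (2 * a * σ) ^ 2)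
  have hd : d ^ 2 = 1 - (2 * a * σ) ^ 2 := Real.sq_sqrt (by linarith)
  have hdC : (d : ℂ) ^ 2 = 1 - (2 * a * σ) ^ 2 := by exact_mod_cast hd
  obtain ⟨e, he, hed, hμe⟩ : ∃ e : ℝ, e ^ 2 = d ^ 2 ∧ e ≤ d ∧ 2 * μ - 1 + 2 * a * ν = e := by
    have hsq : (2 * μ - 1 + 2 * a * ν) ^ 2 = (d : ℂ) ^ 2 := by
      linear_combination 4 * hμ + 4 * (a : ℂ) ^ 2 * hν - hdC
    rcases sq_eq_sq_iff_eq_or_eq_neg.mp hsq with h | h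
    · exact ⟨d, rfl, le_rfl, h⟩
    · exact ⟨-d, by ring, by linarith [Real.sqrt_nonneg (1 - (2 * a * σ) ^ 2)], by simpa using h⟩
  obtain ⟨s, hs, hνs⟩ : ∃ s : ℝ, s ^ 2 = σ ^ 2 ∧ ν = s * I := by
    have hsq : ν ^ 2 = (σ * I) ^ 2 := by rw [hν, mul_pow, I_sq]; ring
    rcases sq_eq_sq_iff_eq_or_eq_neg.mp hsq with h | h
    · exact ⟨σ, rfl, h⟩
    · exact ⟨-σ, by ring, by simpa using h⟩
  have hμ' : μ = ((1 + e) / 2 : ℝ) + (-(a * s) : ℝ) * I := by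
    push_cast
    linear_combination hμe / 2 - a * hνs
  have hnormSq : ‖μ‖ ^ 2 = 1 / 2 + 1 / 2 * e := by
    rw [hμ', Complex.sq_norm, normSq_add_mul_I]
    linear_combination (1 / 4) * he + a ^ 2 * hs + (1 / 4) * hd
  rw [← Real.sqrt_sq (norm_nonneg μ), hnormSq]
  gcongr

theorem exists_lead_root (hσ : (2 * a * σ) ^ 2 ≤ 1) :
    ∃ μ : ℂ, μ ^ 2 - μ = (a - 2 * a * μ) * (σ * I) ∧
      ‖μ‖ = √(1 / 2 + 1 / 2 * √(1 - (2 * a * σ) ^ 2)) := by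
  set d := √(1 - (2 * a * σ) ^ 2)
  have hd : d ^ 2 = 1 - (2 * a * σ) ^ 2 := Real.sq_sqrt (by linarith)
  have hdC : (d : ℂ) ^ 2 = 1 - (2 * a * σ) ^ 2 := by exact_mod_cast hd
  refine ⟨((1 + d) / 2 : ℝ) + (-(a * σ) : ℝ) * I, ?_, ?_⟩
  · push_cast
    linear_combination (1 / 4) * hdC - (a : ℂ) ^ 2 * (σ : ℂ) ^ 2 * I_sq
  · rw [← Real.sqrt_sq (norm_nonneg _), Complex.sq_norm, normSq_add_mul_I]
    congr 1
    linear_combination (1 / 4) * hd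

end LeadRoot

section BilinearGame

open Complex

variable {m : Type*} [Fintype m] [DecidableEq m] {A : Matrix m m ℝ} {a : ℝ} {μ : ℂ}

theorem exists_mem_singularValues_of_leadJacobian_mulVec (hA : IsUnit A.det) (ha : a ≠ 0)
    {z : (m ⊕ m) ⊕ (m ⊕ m) → ℂ} (hz : z ≠ 0)
    (h : leadJacobian (a : ℂ) a (bilinearJacobian (A.map ofReal)) *ᵥ z = μ • z) :
    ∃ σ ∈ singularValues A, ∃ ν : ℂ, ν ^ 2 = -(σ : ℂ) ^ 2 ∧ μ ^ 2 - μ = (a - 2 * a * μ) * ν := by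
  obtain ⟨y, hy, ν, hyν, hμ⟩ := exists_mulVec_eq_smul_of_leadJacobian (ofReal_ne_zero.mpr ha) hz h
  have hB : IsUnit (A.map ofReal).det := (ofRealHom.map_det A) ▸ hA.map ofRealHom
  obtain ⟨v, hv, hvν⟩ := exists_transpose_mul_self_mulVec_of_bilinearJacobian hB hy hyν
  obtain ⟨σ, hσ, hνσ⟩ := exists_mem_singularValues_of_mulVec_eq_smul hv hvν
  exact ⟨σ, hσ, ν, by linear_combination -hνσ, hμ⟩

theorem exists_leadJacobian_mulVec_of_mem_singularValues {σ : ℝ} (hσ : σ ∈ singularValues A)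
    (hσ0 : σ ≠ 0) (hμ : μ ^ 2 - μ = (a - 2 * a * μ) * (σ * I)) :
    ∃ z ≠ 0, leadJacobian (a : ℂ) a (bilinearJacobian (A.map ofReal)) *ᵥ z = μ • z := by
  obtain ⟨-, w, hw, hwσ⟩ := hσ
  have hν : (σ * I : ℂ) ≠ 0 := mul_ne_zero (ofReal_ne_zero.mpr hσ0) I_ne_zero
  have hwC : ((A.map ofReal)ᵀ * A.map ofReal) *ᵥ (ofReal ∘ w) = (-(σ * I) ^ 2) • (ofReal ∘ w) := by
    ext i
    have hwσi := ofRealHom.map_mulVec (Aᵀ * A) w i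
    rw [hwσ] at hwσi
    rw [map_ofReal_transpose_mul_self]
    refine hwσi.symm.trans ?_
    simp [mul_pow]
  refine ⟨_, ?_, leadJacobian_mulVec_of_mulVec_eq_smul
    (bilinearJacobian_mulVec_of_transpose_mul_self_mulVec hν hwC) (by rwa [← two_mul])⟩
  exact fun h ↦ hw (funext fun i ↦ by simpa using congrFun h (Sum.inr (Sum.inr i)))

end BilinearGame

/-- With η = α = 1/(2σ_max(A)) and β = 0, the spectral radius of the LEAD update
Jacobian for the bilinear game equals √(1/2 + (1/2)√(1 - σ_min²/σ_max²)) < 1. -/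
theorem lead_spectral_radius
    (n : ℕ) (A : Matrix (Fin n) (Fin n) ℝ) (hA : IsUnit A.det)
    (σmax σmin : ℝ)
    (hmax : IsGreatest {σ : ℝ | 0 ≤ σ ∧
      ∃ w : Fin n → ℝ, w ≠ 0 ∧ (Aᵀ * A).mulVec w = (σ ^ 2) • w} σmax)
    (hmin : IsLeast {σ : ℝ | 0 ≤ σ ∧
      ∃ w : Fin n → ℝ, w ≠ 0 ∧ (Aᵀ * A).mulVec w = (σ ^ 2) • w} σmin)
    (hσmin : 0 < σmin)
    (η α : ℝ) (hη : η = 1 / (2 * σmax)) (hα : α = 1 / (2 * σmax))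
    (J : Matrix (Fin n ⊕ Fin n) (Fin n ⊕ Fin n) ℝ)
    (hJ : J = Matrix.fromBlocks 0 A (-Aᵀ) 0) :
    IsGreatest {r : ℝ | ∃ μ : ℂ,
        (∃ z : ((Fin n ⊕ Fin n) ⊕ (Fin n ⊕ Fin n)) → ℂ, z ≠ 0 ∧
          ((Matrix.fromBlocks ((1 : Matrix (Fin n ⊕ Fin n) (Fin n ⊕ Fin n) ℝ) - (η + α) • J)
              (α • J) 1 0).map (Complex.ofReal)).mulVec z = μ • z) ∧
        r = ‖μ‖}
      (Real.sqrt (1/2 + (1/2) * Real.sqrt (1 - σmin ^ 2 / σmax ^ 2))) ∧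
    Real.sqrt (1/2 + (1/2) * Real.sqrt (1 - σmin ^ 2 / σmax ^ 2)) < 1 := by
  have hσmax : 0 < σmax := hσmin.trans_le (hmin.2 hmax.1)
  set a := 1 / (2 * σmax)
  have h2a (σ : ℝ) : (2 * a * σ) ^ 2 = σ ^ 2 / σmax ^ 2 := by
    simp only [a]
    field_simp
  have hσ_le (σ : ℝ) (hσ : σ ∈ singularValues A) : (2 * a * σ) ^ 2 ≤ 1 := by
    rw [h2a, div_le_one (by positivity)]
    exact pow_le_pow_left₀ hσ.1 (hmax.2 hσ) 2
  have hM : (fromBlocks (1 - (η + α) • J) (α • J) 1 0).map Complex.ofReal =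
      leadJacobian (a : ℂ) a (bilinearJacobian (A.map Complex.ofReal)) := by
    subst hη hα hJ
    exact (leadJacobian_map Complex.ofRealHom a a (bilinearJacobian A)).trans
      (congrArg _ (bilinearJacobian_map Complex.ofRealHom A))
  rw [hM]
  refine ⟨⟨?_, ?_⟩, ?_⟩
  · obtain ⟨μ, hμ, hμ_norm⟩ := exists_lead_root (hσ_le σmin hmin.1)
    refine ⟨μ, exists_leadJacobian_mulVec_of_mem_singularValues hmin.1 hσmin.ne' hμ, ?_⟩
    rw [hμ_norm, h2a]
  · rintro _ ⟨μ, ⟨z, hz, hzμ⟩, rfl⟩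
    obtain ⟨σ, hσ, ν, hν, hμ⟩ :=
      exists_mem_singularValues_of_leadJacobian_mulVec hA (by positivity) hz hzμ
    refine (norm_le_of_lead_root (hσ_le σ hσ) hν hμ).trans ?_
    rw [h2a]
    have hσmin_le : σmin ≤ σ := hmin.2 hσ
    gcongr
  · have hq : 0 < σmin ^ 2 / σmax ^ 2 := by positivity
    have hd : √(1 - σmin ^ 2 / σmax ^ 2) < 1 := (Real.sqrt_lt' one_pos).mpr (by linarith)
    exact (Real.sqrt_lt' one_pos).mpr (by linarith)
end
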